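/- Under conditions (i) and (ii) of exposure unconfoundedness, the conditional probability of the exposure admits the decomposition P(E = e | Y, C) = Σ_{a,g} 1[h(a,g) = e] · P(G = g | A = a, C) · P(A = a | C), where the sum ranges over all values a of A and g of G. -/

import Mathlib

open Classical

/-- Probability of an event under a weight function on a finite sample space. -/
noncomputable def Pr {Ω : Type*} [Fintype Ω] (w : Ω → ℝ) (p : Ω → Prop) : ℝ :=
  ∑ ω, if p ω then w ω else 0

/-- Conditional probability P(p | q). -/
noncomputable def CPr {Ω : Type*} [Fintype Ω] (w : Ω → ℝ) (p q : Ω → Prop) : ℝ :=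
  Pr w (fun ω => p ω ∧ q ω) / Pr w q

/-!
Split the event `h(A, G) = e` along the values `(a, g)` of `(A, G)`. Each piece factors by the
chain rule as `P(G = g | A = a, Y, C) · P(A = a | Y, C)`, and conditions (ii) and (i) remove `Y`
from the two factors.
-/

section Pr

variable {Ω : Type*} [Fintype Ω] (w : Ω → ℝ)

theorem Pr_congr {p q : Ω → Prop} (h : ∀ ω, p ω ↔ q ω) : Pr w p = Pr w q :=
  congrArg (Pr w) (funext fun ω => propext (h ω))

theorem Pr_eq_zero_of_forall_not {p : Ω → Prop} (h : ∀ ω, ¬ p ω) : Pr w p = 0 :=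
  Finset.sum_eq_zero fun ω _ => if_neg (h ω)

variable {w}

theorem Pr_nonneg (hw : ∀ ω, 0 ≤ w ω) (p : Ω → Prop) : 0 ≤ Pr w p :=
  Finset.sum_nonneg fun ω _ => by split_ifs <;> simp [hw ω]

theorem Pr_mono (hw : ∀ ω, 0 ≤ w ω) {p q : Ω → Prop} (h : ∀ ω, p ω → q ω) :
    Pr w p ≤ Pr w q :=
  Finset.sum_le_sum fun ω _ => by
    by_cases hp : p ω
    · simp [hp, h ω hp]
    · simp only [hp, if_false]; split_ifs <;> simp [hw ω]

theorem CPr_and_eq_mul (hw : ∀ ω, 0 ≤ w ω) (p q r : Ω → Prop) :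
    CPr w (fun ω => q ω ∧ p ω) r = CPr w p (fun ω => q ω ∧ r ω) * CPr w q r := by
  unfold CPr
  have hassoc : Pr w (fun ω => (q ω ∧ p ω) ∧ r ω) = Pr w (fun ω => p ω ∧ q ω ∧ r ω) :=
    Pr_congr w fun ω => by tauto
  rw [hassoc]
  by_cases hqr : Pr w (fun ω => q ω ∧ r ω) = 0
  · have hpqr : Pr w (fun ω => p ω ∧ q ω ∧ r ω) = 0 :=
      le_antisymm (hqr ▸ Pr_mono hw fun ω => And.right) (Pr_nonneg hw _)
    simp [hqr, hpqr]
  · rw [div_mul_div_comm, mul_comm (Pr w _), mul_div_mul_left _ _ hqr]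

variable (w)

theorem Pr_eq_sum_fiber {ξ : Type*} [Fintype ξ] (X : Ω → ξ) (p : Ω → Prop) :
    Pr w p = ∑ x, Pr w (fun ω => p ω ∧ X ω = x) := by
  unfold Pr
  rw [Finset.sum_comm]
  refine Finset.sum_congr rfl fun ω _ => ?_
  by_cases hp : p ω <;> simp [hp]

theorem CPr_comp_eq_sum {ξ η : Type*} [Fintype ξ] (X : Ω → ξ) (f : ξ → η) (e : η)
    (q : Ω → Prop) :
    CPr w (fun ω => f (X ω) = e) q
      = ∑ x, (if f x = e then (1 : ℝ) else 0) * CPr w (fun ω => X ω = x) q := by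
  unfold CPr
  rw [Pr_eq_sum_fiber w X, Finset.sum_div]
  refine Finset.sum_congr rfl fun x _ => ?_
  by_cases hx : f x = e
  · rw [if_pos hx, one_mul]
    congr 1
    exact Pr_congr w fun ω => ⟨fun ⟨⟨_, hq⟩, hX⟩ => ⟨hX, hq⟩, fun ⟨hX, hq⟩ => ⟨⟨show f (X ω) = e from hX ▸ hx, hq⟩, hX⟩⟩
  · rw [if_neg hx, zero_mul, Pr_eq_zero_of_forall_not w fun ω ⟨⟨he, _⟩, hX⟩ => hx (hX ▸ he),
      zero_div]

end Pr

theorem exposure_conditional_decomposition_general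
    {Ω α γ β κ η : Type*} [Fintype Ω] [Fintype α] [Fintype γ]
    (w : Ω → ℝ) (hw : ∀ ω, 0 ≤ w ω)
    (A : Ω → α) (G : Ω → γ) (Y : Ω → β) (C : Ω → κ) (h : α → γ → η)
    (hA : ∀ (a : α) (y : β) (c : κ),
      CPr w (fun ω => A ω = a) (fun ω => Y ω = y ∧ C ω = c)
        = CPr w (fun ω => A ω = a) (fun ω => C ω = c))
    (hG : ∀ (g : γ) (a : α) (y : β) (c : κ),
      CPr w (fun ω => G ω = g) (fun ω => A ω = a ∧ Y ω = y ∧ C ω = c)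
        = CPr w (fun ω => G ω = g) (fun ω => A ω = a ∧ C ω = c))
    (e : η) (y : β) (c : κ) :
    CPr w (fun ω => h (A ω) (G ω) = e) (fun ω => Y ω = y ∧ C ω = c)
      = ∑ a : α, ∑ g : γ, (if h a g = e then (1 : ℝ) else 0)
          * CPr w (fun ω => G ω = g) (fun ω => A ω = a ∧ C ω = c)
          * CPr w (fun ω => A ω = a) (fun ω => C ω = c) := by
  have hfactor : ∀ a g, CPr w (fun ω => (A ω, G ω) = (a, g)) (fun ω => Y ω = y ∧ C ω = c)
      = CPr w (fun ω => G ω = g) (fun ω => A ω = a ∧ C ω = c)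
        * CPr w (fun ω => A ω = a) (fun ω => C ω = c) := by
    intro a g
    simp only [Prod.mk.injEq]
    rw [CPr_and_eq_mul hw, hG, hA]
  refine (CPr_comp_eq_sum w (fun ω => (A ω, G ω)) (Function.uncurry h) e _).trans ?_
  simp only [Fintype.sum_prod_type, Function.uncurry_apply_pair, hfactor, mul_assoc]
  rfl

/-- Decomposition of the conditional probability of the exposure under
treatment and network unconfoundedness:
P(E = e | Y = y, C = c) = Σ_{a,g} 1[h(a,g)=e] · P(G = g | A = a, C = c) · P(A = a | C = c). -/
theorem exposure_conditional_decomposition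
    {Ω α γ β κ η : Type*} [Fintype Ω] [Fintype α] [Fintype γ]
    (w : Ω → ℝ) (hw : ∀ ω, 0 ≤ w ω) (hsum : ∑ ω, w ω = 1)
    (A : Ω → α) (G : Ω → γ) (Y : Ω → β) (C : Ω → κ) (h : α → γ → η)
    (hpos : ∀ (a : α) (g : γ) (y : β) (c : κ),
      0 < Pr w (fun ω => A ω = a ∧ G ω = g ∧ Y ω = y ∧ C ω = c))
    (hA : ∀ (a : α) (y : β) (c : κ),
      CPr w (fun ω => A ω = a) (fun ω => Y ω = y ∧ C ω = c)
        = CPr w (fun ω => A ω = a) (fun ω => C ω = c))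
    (hG : ∀ (g : γ) (a : α) (y : β) (c : κ),
      CPr w (fun ω => G ω = g) (fun ω => A ω = a ∧ Y ω = y ∧ C ω = c)
        = CPr w (fun ω => G ω = g) (fun ω => A ω = a ∧ C ω = c))
    (e : η) (y : β) (c : κ) :
    CPr w (fun ω => h (A ω) (G ω) = e) (fun ω => Y ω = y ∧ C ω = c)
      = ∑ a : α, ∑ g : γ, (if h a g = e then (1 : ℝ) else 0)
          * CPr w (fun ω => G ω = g) (fun ω => A ω = a ∧ C ω = c)
          * CPr w (fun ω => A ω = a) (fun ω => C ω = c) :=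
  exposure_conditional_decomposition_general w hw A G Y C h hA hG e y c
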